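/- arXiv:1908.05775 — 4 statements merged into one kernel-verified Lean document; each statement's English description precedes it below -/
import Mathlib

section
/- Let A = I + N be an upper triangular ℕ×ℕ matrix over a commutative domain R with positive part R_+, with 1's on the diagonal, all entries in R_+, and N strictly upper triangular and nonzero. If (i,j) is the position of a nonzero entry of N minimizing the pair (j-i, i) lexicographically among nonzero entries, then the (i,j) entry of A^{-1} equals -N_{ij}. Consequently, if both A and A^{-1} have all entries in R_+, then N = 0, i.e., A = I. -/
/-!
Write `B = (1 + N)⁻¹`. From `(1 + N) * B = 1` we get `B = 1 - N * B`, and since `N` is strictly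
and `B` weakly upper triangular, `(N * B) i j` only involves the entries `N i k` with `k ≤ j`.
If `(i, j)` is a lexicographically minimal nonzero position of `N`, every `N i k` with `k < j`
vanishes, the diagonal of `B` is `1`, and so `B i j = -N i j`. If both `A` and `A⁻¹` have entries
in `R₊`, then `N i j` and `-N i j` both lie in `R₊`, forcing `N i j = 0`.
-/

namespace Matrix

variable {n R : Type*} [LinearOrder n] [DecidableEq n]

theorem isUpperTriangular_one_add [AddZeroClass R] [One R] {N : Matrix n n R}
    (hN : ∀ i j, j ≤ i → N i j = 0) :
    (1 + N).IsUpperTriangular := fun i j (hji : j < i) => by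
  simp [one_apply_ne hji.ne', hN i j hji.le]

variable [Fintype n] [CommRing R] {N : Matrix n n R}

theorem det_one_add_of_strictUpper (hN : ∀ i j, j ≤ i → N i j = 0) : (1 + N).det = 1 := by
  simp [det_of_isUpperTriangular (isUpperTriangular_one_add hN), hN _ _ le_rfl]

theorem isUpperTriangular_inv_one_add (hN : ∀ i j, j ≤ i → N i j = 0) :
    (1 + N)⁻¹.IsUpperTriangular :=
  have : Invertible (1 + N) := invertibleOfIsUnitDet _ (by simp [det_one_add_of_strictUpper hN])
  blockTriangular_inv_of_blockTriangular (isUpperTriangular_one_add hN)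

theorem inv_one_add_eq_one_sub_mul (hN : ∀ i j, j ≤ i → N i j = 0) :
    (1 + N)⁻¹ = 1 - N * (1 + N)⁻¹ := by
  have h := mul_nonsing_inv (1 + N) (by simp [det_one_add_of_strictUpper hN])
  rw [add_mul, one_mul] at h
  exact eq_sub_of_add_eq h

theorem inv_one_add_apply_of_forall_lt (hN : ∀ i j, j ≤ i → N i j = 0) {i j : n}
    (hi : ∀ k < j, N i k = 0) :
    (1 + N)⁻¹ i j = (1 : Matrix n n R) i j - N i j * (1 + N)⁻¹ j j := by
  conv_lhs => rw [inv_one_add_eq_one_sub_mul hN]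
  rw [sub_apply, mul_apply, Finset.sum_eq_single j]
  · intro k _ hkj
    rcases hkj.lt_or_gt with hkj | hjk
    · rw [hi k hkj, zero_mul]
    · rw [isUpperTriangular_inv_one_add hN hjk, mul_zero]
  · simp

theorem inv_one_add_apply_self (hN : ∀ i j, j ≤ i → N i j = 0) (j : n) :
    (1 + N)⁻¹ j j = 1 := by
  simpa [hN j j le_rfl] using
    inv_one_add_apply_of_forall_lt hN fun k hk => hN j k hk.le

theorem inv_one_add_apply_of_ne (hN : ∀ i j, j ≤ i → N i j = 0) {i j : n} (hij : i ≠ j)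
    (hi : ∀ k < j, N i k = 0) : (1 + N)⁻¹ i j = -N i j := by
  simp [inv_one_add_apply_of_forall_lt hN hi, inv_one_add_apply_self hN, one_apply_ne hij]

end Matrix

open Matrix

theorem apply_eq_zero_of_lt_of_lexMinimal {R : Type*} [Zero R] {m : ℕ}
    {N : Matrix (Fin m) (Fin m) R} (hN : ∀ i j : Fin m, j ≤ i → N i j = 0) {i j : Fin m}
    (hmin : ∀ i' j' : Fin m, N i' j' ≠ 0 →
      toLex (((j : ℕ) - (i : ℕ), (i : ℕ))) ≤ toLex (((j' : ℕ) - (i' : ℕ), (i' : ℕ))))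
    (k : Fin m) (hkj : k < j) : N i k = 0 := by
  by_contra hik
  have hik' : i < k := lt_of_not_ge fun hki => hik (hN i k hki)
  have := Prod.Lex.monotone_fst _ _ (hmin i k hik)
  simp only [ofLex_toLex] at this
  omega

theorem exists_lexMinimal_ne_zero {R : Type*} [Zero R] {m : ℕ}
    {N : Matrix (Fin m) (Fin m) R} (hN0 : N ≠ 0) :
    ∃ i j : Fin m, N i j ≠ 0 ∧ ∀ i' j' : Fin m, N i' j' ≠ 0 →
      toLex (((j : ℕ) - (i : ℕ), (i : ℕ))) ≤ toLex (((j' : ℕ) - (i' : ℕ), (i' : ℕ))) := by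
  have hne : {p : Fin m × Fin m | N p.1 p.2 ≠ 0}.Nonempty := by
    by_contra h
    exact hN0 (ext fun i j => by_contra fun hij => h ⟨(i, j), hij⟩)
  obtain ⟨⟨i, j⟩, hij, hmin⟩ := Set.exists_min_image _
    (fun p : Fin m × Fin m => toLex (((p.2 : ℕ) - (p.1 : ℕ), (p.1 : ℕ)))) (Set.toFinite _) hne
  exact ⟨i, j, hij, fun i' j' h => hmin (i', j') h⟩

theorem stmt_6_general {R : Type*} [CommRing R] (Rp : Set R)
    (hcap : ∀ a : R, a ∈ Rp → -a ∈ Rp → a = 0)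
    (m : ℕ) (N A : Matrix (Fin m) (Fin m) R)
    (hN : ∀ i j : Fin m, j ≤ i → N i j = 0)
    (hA : A = 1 + N)
    (hApos : ∀ i j, A i j ∈ Rp) :
    (∀ i j : Fin m, N i j ≠ 0 →
      (∀ i' j' : Fin m, N i' j' ≠ 0 →
        toLex (((j : ℕ) - (i : ℕ), (i : ℕ))) ≤ toLex (((j' : ℕ) - (i' : ℕ), (i' : ℕ)))) →
      A⁻¹ i j = - N i j) ∧
    ((∀ i j, A⁻¹ i j ∈ Rp) → N = 0) := by
  subst hA
  have hinv : ∀ i j : Fin m, N i j ≠ 0 →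
      (∀ i' j' : Fin m, N i' j' ≠ 0 →
        toLex (((j : ℕ) - (i : ℕ), (i : ℕ))) ≤ toLex (((j' : ℕ) - (i' : ℕ), (i' : ℕ)))) →
      (1 + N)⁻¹ i j = -N i j := fun i j hij hmin =>
    inv_one_add_apply_of_ne hN (fun h => hij (hN i j h.ge))
      (apply_eq_zero_of_lt_of_lexMinimal hN hmin)
  refine ⟨hinv, fun hBpos => ?_⟩
  by_contra hN0
  obtain ⟨i, j, hij, hmin⟩ := exists_lexMinimal_ne_zero hN0
  have hentry : (1 + N) i j = N i j := by
    simp [one_apply_ne fun h : i = j => hij (hN i j h.ge)]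
  exact hij <| hcap _ (hentry ▸ hApos i j) (hinv i j hij hmin ▸ hBpos i j)

/-- Let A = I + N be upper triangular with 1's on the diagonal, all entries
    in R₊, and N strictly upper triangular and nonzero. If (i,j) is a nonzero entry of N
    minimizing (j-i, i) lexicographically, then (A⁻¹)ᵢⱼ = -Nᵢⱼ. Consequently, if all entries
    of A⁻¹ are also in R₊, then N = 0, i.e. A = I. -/
theorem stmt_6 {R : Type*} [CommRing R] [IsDomain R] (Rp : Set R)
    (h1 : (1 : R) ∈ Rp)
    (hadd : ∀ a ∈ Rp, ∀ b ∈ Rp, a + b ∈ Rp)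
    (hmul : ∀ a ∈ Rp, ∀ b ∈ Rp, a * b ∈ Rp)
    (hcap : ∀ a : R, a ∈ Rp → -a ∈ Rp → a = 0)
    (m : ℕ) (N A : Matrix (Fin m) (Fin m) R)
    (hN : ∀ i j : Fin m, j ≤ i → N i j = 0)
    (hA : A = 1 + N)
    (hApos : ∀ i j, A i j ∈ Rp) :
    (∀ i j : Fin m, N i j ≠ 0 →
      (∀ i' j' : Fin m, N i' j' ≠ 0 →
        toLex (((j : ℕ) - (i : ℕ), (i : ℕ))) ≤ toLex (((j' : ℕ) - (i' : ℕ), (i' : ℕ)))) →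
      A⁻¹ i j = - N i j) ∧
    ((∀ i j, A⁻¹ i j ∈ Rp) → N = 0) :=
  stmt_6_general Rp hcap m N A hN hA hApos
end

section
/- Suppose a, b, b_n (n ∈ ℤ), c_0, c_1 are elements of an associative ℤ[q^{±1}]-algebra with a central, satisfying a·b_n = q² b_{n+1} + q^{-2} b_{n-1} + c_n for all n, where c_n = c_0 for n even and c_n = c_1 for n odd, and b_0 = b, with c_0, c_1 central. Then for all n ≥ 0, T_n(a)·b = q^{2n} b_n + q^{-2n} b_{-n} + c_0 f_n(a) + c_1 g_n(a), where f_n(a) = Σ_{0<i≤n, i odd} [i] T̂_{n-i}(a) and g_n(a) = Σ_{0<i≤n, i even} [i] T̂_{n-i}(a). -/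
open Polynomial

/-- Chebyshev polynomials of type one: T₀=2, T₁=x, Tₙ = x Tₙ₋₁ - Tₙ₋₂. -/
noncomputable def Tc : ℕ → Polynomial ℤ
  | 0 => 2
  | 1 => X
  | n + 2 => X * Tc (n + 1) - Tc n

/-- Chebyshev polynomials of type two: S₀=1, S₁=x, Sₙ = x Sₙ₋₁ - Sₙ₋₂. -/
noncomputable def Sc : ℕ → Polynomial ℤ
  | 0 => 1
  | 1 => X
  | n + 2 => X * Sc (n + 1) - Sc n

/-- Normalized Chebyshev polynomials of type one: T̂₀=1, T̂ₙ=Tₙ for n ≥ 1. -/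
noncomputable def Tch (n : ℕ) : Polynomial ℤ := if n = 0 then 1 else Tc n

/-- The quantum integer [i] = q^{2i-2} + q^{2i-6} + ⋯ + q^{2-2i} in ℤ[q^{±1}]. -/
noncomputable def qint (i : ℕ) : LaurentPolynomial ℤ :=
  ∑ j ∈ Finset.range i, LaurentPolynomial.T (2 * (i : ℤ) - 2 - 4 * j)

/-- T̂ₙ viewed in ℤ[q^{±1}][a]. -/
noncomputable def TchL (n : ℕ) : Polynomial (LaurentPolynomial ℤ) :=
  (Tch n).map (Int.castRingHom (LaurentPolynomial ℤ))

/-- fₙ(a) = Σ_{0<i≤n, i odd} [i] T̂_{n-i}(a). -/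
noncomputable def fpol (n : ℕ) : Polynomial (LaurentPolynomial ℤ) :=
  ∑ i ∈ (Finset.range (n + 1)).filter (fun i => Odd i),
    Polynomial.C (qint i) * TchL (n - i)

/-- gₙ(a) = Σ_{0<i≤n, i even} [i] T̂_{n-i}(a). -/
noncomputable def gpol (n : ℕ) : Polynomial (LaurentPolynomial ℤ) :=
  ∑ i ∈ (Finset.range (n + 1)).filter (fun i => 0 < i ∧ Even i),
    Polynomial.C (qint i) * TchL (n - i)

/-!
Both sides satisfy the Chebyshev recurrence `uₙ₊₂ = a uₙ₊₁ - uₙ` up to matching inhomogeneous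
terms, and they agree for `n = 0, 1`. On the `b`-part, the defining relation applied at `±(n + 1)`
reproduces the recurrence plus `(q^{2n+2} + q^{-2n-2}) cₙ₊₁`. On the central part,
`X T̂ₘ₊₁ = T̂ₘ₊₂ + T̂ₘ + [m = 0]` makes every convolution `∑ wᵢ T̂ₙ₋ᵢ` satisfy the recurrence up
to `wₙ₊₂ - wₙ`; for the weights `[i]` of `fₙ` and `gₙ` this is
`[n + 2] - [n] = q^{2n+2} + q^{-2n-2}` on the parity class of `n`.
-/

open LaurentPolynomial (T)
open scoped LaurentPolynomial
open Finset

lemma qint_zero : qint 0 = 0 := by simp [qint]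

lemma qint_one : qint 1 = 1 := by simp [qint]

lemma qint_add_two_sub (n : ℕ) :
    qint (n + 2) - qint n = T (2 * n + 2) + T (-(2 * n + 2)) := by
  -- the exponents of `[n + 2]` are `2n + 2`, those of `[n]`, and `-(2n + 2)`
  rw [qint, sum_range_succ', sum_range_succ, qint]
  have shift : ∀ j ∈ range n, (T (2 * ((n + 2 : ℕ) : ℤ) - 2 - 4 * ((j + 1 : ℕ) : ℤ)) :
      ℤ[T;T⁻¹]) = T (2 * (n : ℤ) - 2 - 4 * j) := fun j _ => by
    congr 1
    push_cast
    ring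
  rw [sum_congr rfl shift]
  push_cast
  ring_nf

lemma Tc_add_two (n : ℕ) : Tc (n + 2) = X * Tc (n + 1) - Tc n := rfl

lemma Tch_zero : Tch 0 = 1 := rfl

lemma Tch_one : Tch 1 = X := rfl

lemma Tch_add_ite (m : ℕ) : Tch m + (if m = 0 then 1 else 0) = Tc m := by
  rcases m with _ | m
  · exact one_add_one_eq_two
  · rw [Tch, if_neg m.succ_ne_zero, if_neg m.succ_ne_zero, add_zero]

lemma X_mul_Tch_succ (m : ℕ) :
    X * Tch (m + 1) = Tch (m + 2) + Tch m + if m = 0 then 1 else 0 := by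
  rw [add_assoc, Tch_add_ite, Tch, Tch, if_neg m.succ_ne_zero, if_neg (by omega), Tc_add_two]
  ring

section Convolution

variable {R : Type*} [CommRing R]

noncomputable def tchConv (w : ℕ → R[X]) (n : ℕ) : R[X] :=
  ∑ i ∈ range (n + 1), w i * (Tch (n - i)).map (Int.castRingHom R)

lemma X_mul_map_Tch_succ (m : ℕ) :
    X * (Tch (m + 1)).map (Int.castRingHom R) =
      (Tch (m + 2)).map (Int.castRingHom R) + (Tch m).map (Int.castRingHom R) +
        if m = 0 then 1 else 0 := by
  simpa [apply_ite (Polynomial.map (Int.castRingHom R))] using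
    congrArg (Polynomial.map (Int.castRingHom R)) (X_mul_Tch_succ m)

theorem tchConv_add_two (w : ℕ → R[X]) (n : ℕ) :
    tchConv w (n + 2) = X * tchConv w (n + 1) - tchConv w n + w (n + 2) - w n := by
  have step : ∀ i ∈ range (n + 1),
      X * (w i * (Tch (n + 1 - i)).map (Int.castRingHom R)) =
        w i * (Tch (n + 2 - i)).map (Int.castRingHom R) +
          w i * (Tch (n - i)).map (Int.castRingHom R) + if i = n then w i else 0 := by
    intro i hi
    have hin : i ≤ n := Nat.lt_succ_iff.mp (mem_range.mp hi)
    rw [show n + 1 - i = n - i + 1 by omega, show n + 2 - i = n - i + 2 by omega,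
      mul_left_comm, X_mul_map_Tch_succ]
    simp only [show n - i = 0 ↔ i = n by omega, mul_add, mul_ite, mul_one, mul_zero]
  simp only [tchConv]
  rw [sum_range_succ _ (n + 2), sum_range_succ _ (n + 1), sum_range_succ _ (n + 1), mul_add,
    mul_sum, sum_congr rfl step, sum_add_distrib, sum_add_distrib, sum_ite_eq',
    if_pos (self_mem_range_succ n), Nat.sub_self, Nat.sub_self, show n + 2 - (n + 1) = 1 by omega]
  simp only [Tch_zero, Tch_one, Polynomial.map_one, map_X, mul_one]
  ring

end Convolution

lemma fpol_eq_tchConv (n : ℕ) :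
    fpol n = tchConv (fun i => if Odd i then C (qint i) else 0) n := by
  simp only [fpol, tchConv, sum_filter, ite_mul, zero_mul]
  rfl

lemma gpol_eq_tchConv (n : ℕ) :
    gpol n = tchConv (fun i => if Even i then C (qint i) else 0) n := by
  rw [gpol, tchConv, sum_filter]
  refine sum_congr rfl fun i _ => ?_
  rcases i.eq_zero_or_pos with rfl | hi
  · simp [qint_zero]
  · simp [hi, TchL]

lemma fpol_zero : fpol 0 = 0 := by simp [fpol_eq_tchConv, tchConv]

lemma fpol_one : fpol 1 = 1 := by
  simp [fpol_eq_tchConv, tchConv, sum_range_succ, qint_one, Tch_zero]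

lemma gpol_zero : gpol 0 = 0 := by simp [gpol_eq_tchConv, tchConv, qint_zero]

lemma gpol_one : gpol 1 = 0 := by simp [gpol_eq_tchConv, tchConv, sum_range_succ, qint_zero]

lemma parity_weight_add_two_sub {P : ℕ → Prop} [DecidablePred P] (hP : ∀ n, P (n + 2) ↔ P n)
    (n : ℕ) :
    ((if P (n + 2) then C (qint (n + 2)) else 0) - if P n then C (qint n) else 0) =
      if P n then C (T (2 * n + 2) + T (-(2 * n + 2))) else 0 := by
  rw [← qint_add_two_sub, C_sub]
  by_cases h : P n <;> simp [h, hP]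

section Algebra

variable {A : Type*} [Ring A] [Algebra ℤ[T;T⁻¹] A]

theorem aeval_fpol_add_two (a : A) (n : ℕ) :
    aeval a (fpol (n + 2)) = a * aeval a (fpol (n + 1)) - aeval a (fpol n) +
      if Odd n then algebraMap ℤ[T;T⁻¹] A (T (2 * n + 2) + T (-(2 * n + 2))) else 0 := by
  rw [fpol_eq_tchConv, fpol_eq_tchConv, fpol_eq_tchConv, tchConv_add_two, add_sub_assoc,
    parity_weight_add_two_sub (fun n => by simp [Nat.odd_add])]
  simp [apply_ite (aeval a)]

theorem aeval_gpol_add_two (a : A) (n : ℕ) :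
    aeval a (gpol (n + 2)) = a * aeval a (gpol (n + 1)) - aeval a (gpol n) +
      if Even n then algebraMap ℤ[T;T⁻¹] A (T (2 * n + 2) + T (-(2 * n + 2))) else 0 := by
  rw [gpol_eq_tchConv, gpol_eq_tchConv, gpol_eq_tchConv, tchConv_add_two, add_sub_assoc,
    parity_weight_add_two_sub (fun n => by simp [Nat.even_add])]
  simp [apply_ite (aeval a)]

noncomputable def centralPart (a c0 c1 : A) (n : ℕ) : A :=
  c0 * aeval a (fpol n) + c1 * aeval a (gpol n)

theorem centralPart_add_two {a c0 c1 : A} (h0 : Commute a c0) (h1 : Commute a c1) (n : ℕ) :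
    centralPart a c0 c1 (n + 2) =
      a * centralPart a c0 c1 (n + 1) - centralPart a c0 c1 n +
        (T (2 * n + 2) + T (-(2 * n + 2)) : ℤ[T;T⁻¹]) • (if Even n then c1 else c0) := by
  simp only [centralPart, aeval_fpol_add_two, aeval_gpol_add_two, mul_add, mul_sub,
    h0.left_comm, h1.left_comm]
  by_cases hn : Even n <;>
    simp only [hn, ← Nat.not_even_iff_odd, not_true_eq_false, not_false_eq_true, if_true,
      if_false, mul_zero, add_zero, ← Algebra.commutes, ← Algebra.smul_def] <;>
    abel

noncomputable def qSymm (b : ℤ → A) (n : ℕ) : A :=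
  (T (2 * (n : ℤ)) : ℤ[T;T⁻¹]) • b n +
    (T (-(2 * (n : ℤ))) : ℤ[T;T⁻¹]) • b (-(n : ℤ))

theorem mul_qSymm_succ {a : A} {b c : ℤ → A}
    (hrec : ∀ n : ℤ, a * b n =
      (T 2 : ℤ[T;T⁻¹]) • b (n + 1) + (T (-2) : ℤ[T;T⁻¹]) • b (n - 1) + c n)
    (n : ℕ) :
    a * qSymm b (n + 1) = qSymm b (n + 2) + qSymm b n +
      (T (2 * n + 2) : ℤ[T;T⁻¹]) • c (n + 1) +
        (T (-(2 * n + 2)) : ℤ[T;T⁻¹]) • c (-(n + 1)) := by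
  simp only [qSymm, mul_add, mul_smul_comm, hrec, smul_add, smul_smul, ← LaurentPolynomial.T_add]
  push_cast
  ring_nf
  abel

end Algebra

theorem eq_of_chebyshev_recurrence {R : Type*} [Ring R] (a : R) {u v : ℕ → R}
    (hu : ∀ n, u (n + 2) = a * u (n + 1) - u n) (hv : ∀ n, v (n + 2) = a * v (n + 1) - v n)
    (h0 : u 0 = v 0) (h1 : u 1 = v 1) : ∀ n, u n = v n
  | 0 => h0
  | 1 => h1
  | n + 2 => by
    rw [hu, hv, eq_of_chebyshev_recurrence a hu hv h0 h1 n,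
      eq_of_chebyshev_recurrence a hu hv h0 h1 (n + 1)]

theorem stmt_9_general {A : Type*} [Ring A] [Algebra (LaurentPolynomial ℤ) A]
    (a c0 c1 : A) (b : ℤ → A)
    (ha : a ∈ Set.center A)
    (hrec : ∀ n : ℤ, a * b n =
      (LaurentPolynomial.T 2 : LaurentPolynomial ℤ) • b (n + 1) +
      (LaurentPolynomial.T (-2) : LaurentPolynomial ℤ) • b (n - 1) +
      (if Even n then c0 else c1)) :
    ∀ n : ℕ, Polynomial.aeval a (Tc n) * b 0 =
      (LaurentPolynomial.T (2 * (n : ℤ)) : LaurentPolynomial ℤ) • b n +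
      (LaurentPolynomial.T (-(2 * (n : ℤ))) : LaurentPolynomial ℤ) • b (-(n : ℤ)) +
      c0 * Polynomial.aeval a (fpol n) + c1 * Polynomial.aeval a (gpol n) := by
  have hcomm (x : A) : Commute a x := (Set.mem_center_iff.mp ha).comm x
  suffices h : ∀ n, aeval a (Tc n) * b 0 = qSymm b n + centralPart a c0 c1 n by
    intro n
    rw [h, add_assoc]
    rfl
  refine eq_of_chebyshev_recurrence a (fun n => ?_) (fun n => ?_) ?_ ?_
  · simp [Tc_add_two, sub_mul, mul_assoc]
  · have hc (k : ℤ) (hk : Even k ↔ Odd n) :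
        (if Even k then c0 else c1) = if Even n then c1 else c0 := by
      simp only [← Nat.not_odd_iff_even, hk, ite_not]
    have hpos : Even ((n : ℤ) + 1) ↔ Odd n := by simp
    have hneg : Even (-((n : ℤ) + 1)) ↔ Odd n := by rw [even_neg, hpos]
    simp only [centralPart_add_two (hcomm c0) (hcomm c1), mul_add, mul_qSymm_succ hrec,
      hc _ hpos, hc _ hneg]
    module
  · simp [qSymm, centralPart, fpol_zero, gpol_zero, Tc, map_ofNat, two_mul]
  · simpa [qSymm, centralPart, fpol_one, gpol_one, Tc] using hrec 0

/-- if a·bₙ = q² b_{n+1} + q⁻² b_{n-1} + cₙ with a, c₀, c₁ central,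
    cₙ = c₀ for n even and c₁ for n odd, and b₀ = b, then
    Tₙ(a)·b = q^{2n} bₙ + q^{-2n} b₋ₙ + c₀ fₙ(a) + c₁ gₙ(a). -/
theorem stmt_9 {A : Type*} [Ring A] [Algebra (LaurentPolynomial ℤ) A]
    (a c0 c1 : A) (b : ℤ → A)
    (ha : a ∈ Set.center A) (hc0 : c0 ∈ Set.center A) (hc1 : c1 ∈ Set.center A)
    (hrec : ∀ n : ℤ, a * b n =
      (LaurentPolynomial.T 2 : LaurentPolynomial ℤ) • b (n + 1) +
      (LaurentPolynomial.T (-2) : LaurentPolynomial ℤ) • b (n - 1) +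
      (if Even n then c0 else c1)) :
    ∀ n : ℕ, Polynomial.aeval a (Tc n) * b 0 =
      (LaurentPolynomial.T (2 * (n : ℤ)) : LaurentPolynomial ℤ) • b n +
      (LaurentPolynomial.T (-(2 * (n : ℤ))) : LaurentPolynomial ℤ) • b (-(n : ℤ)) +
      c0 * Polynomial.aeval a (fpol n) + c1 * Polynomial.aeval a (gpol n) :=
  stmt_9_general a c0 c1 b ha hrec
end

section
/- Let R be a commutative domain with positive part R_+. Suppose (P_n) is a normalized sequence in R[x] such that the family {P_n(z)} in R[z] is a positive basis of R[z] (i.e., all products P_m(z)P_k(z) are R_+-linear combinations of the P_j(z)), that (P_n) ≥ (T̂_n), and that P_i = T̂_i for all i < k, where k ≥ 4. Then P_k = T̂_k. -/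
/-!
The `T̂ᵢ` are monic of degree `i`, hence a basis of `R[x]`; write `Pₖ = T̂ₖ + ∑_{i<k} cᵢ T̂ᵢ` with
`cᵢ ∈ R₊`. For `a + a' = k` with `a, a' < k`, positivity of `(Pₙ)` gives
`T̂ₐ T̂ₐ' = Pₐ Pₐ' = ∑_{i≤k} dᵢ Pᵢ = dₖ T̂ₖ + ∑_{i<k} (dᵢ + dₖ cᵢ) T̂ᵢ` with `dᵢ ∈ R₊`.
If `T̂ₐ T̂ₐ'` has coordinate `1` at `T̂ₖ` and `0` at `T̂ⱼ`, this forces `dₖ = 1` and `dⱼ + cⱼ = 0`,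
so `cⱼ = 0` because `R₊ ∩ -R₊ = 0`. The identity `T̂₁ T̂ₖ₋₁ = T̂ₖ + T̂ₖ₋₂` serves every `j ≠ k - 2`,
and `T̂₂ T̂ₖ₋₂ = T̂ₖ + T̂ₖ₋₄` serves `j = k - 2`.
-/

open Polynomial

theorem Module.Basis.repr_sum_smul_self_apply {ι R M : Type*} [DecidableEq ι] [Semiring R]
    [AddCommMonoid M] [Module R M] (b : Module.Basis ι R M) (s : Finset ι) (a : ι → R) (l : ι) :
    b.repr (∑ i ∈ s, a i • b i) l = if l ∈ s then a l else 0 := by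
  simp [map_sum, Finsupp.single_apply]

theorem Polynomial.Sequence.coeff_sum_smul_self {R : Type*} [Ring R] (S : Polynomial.Sequence R)
    {N : ℕ} (hN : (S N).Monic) (a : ℕ → R) :
    (∑ i ∈ Finset.range (N + 1), a i • S i).coeff N = a N := by
  have hNN : (S N).coeff N = 1 := by simpa using hN.coeff_natDegree
  rw [finsetSum_coeff, Finset.sum_range_succ, Finset.sum_eq_zero, zero_add, coeff_smul, hNN,
    smul_eq_mul, mul_one]
  intro i hi
  rw [coeff_smul, coeff_eq_zero_of_natDegree_lt (by simpa using hi), smul_zero]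

theorem Module.Basis.coeff_eq_zero_of_repr_sum_smul {R M : Type*} [CommRing R] [AddCommGroup M]
    [Module R M] (b : Module.Basis ℕ R M) {Rp : Set R} (hcap : ∀ a : R, a ∈ Rp → -a ∈ Rp → a = 0)
    {P : ℕ → M} {c d : ℕ → R} {k j : ℕ} (hc : ∀ i, c i ∈ Rp) (hd : ∀ i, d i ∈ Rp)
    (hck : c k = 1) (hlt : ∀ i < k, P i = b i) (hPk : P k = ∑ i ∈ Finset.range (k + 1), c i • b i)
    (hj : j < k) (hxk : b.repr (∑ i ∈ Finset.range (k + 1), d i • P i) k = 1)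
    (hxj : b.repr (∑ i ∈ Finset.range (k + 1), d i • P i) j = 0) :
    c j = 0 := by
  have hrepr : ∀ l ≤ k, b.repr (∑ i ∈ Finset.range (k + 1), d i • P i) l =
      (if l < k then d l else 0) + d k * c l := by
    intro l hl
    rw [Finset.sum_range_succ, Finset.sum_congr rfl fun i hi ↦ by rw [hlt i (by simpa using hi)],
      hPk, map_add, Finsupp.add_apply, b.repr_sum_smul_self_apply, map_smul, Finsupp.smul_apply,
      b.repr_sum_smul_self_apply, smul_eq_mul]
    simp [Nat.lt_succ_iff.mpr hl]
  have hdk : d k = 1 := by simpa [hck] using (hrepr k le_rfl).symm.trans hxk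
  have hdc : d j + c j = 0 := by simpa [hj, hdk] using (hrepr j hj.le).symm.trans hxj
  exact hcap (c j) (hc j) (neg_eq_of_add_eq_zero_left hdc ▸ hd j)

namespace Polynomial.Chebyshev

variable (R : Type*) [CommRing R]

theorem C_natCast_mul_C_natCast {m n : ℕ} (h : m ≤ n) :
    C R m * C R n = C R (m + n : ℕ) + C R (n - m : ℕ) := by
  rw [C_mul_C, ← C_neg R (m - n : ℤ)]
  push_cast [h]
  ring_nf

theorem C_natCast_add_two (n : ℕ) : C R (n + 2 : ℕ) = X * C R (n + 1 : ℕ) - C R n := by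
  push_cast
  exact C_add_two R n

theorem natDegree_C_natCast_le : ∀ n : ℕ, (C R n).natDegree ≤ n
  | 0 => by simp [C_zero]
  | 1 => by simpa [C_one] using natDegree_X_le
  | n + 2 => by
    rw [C_natCast_add_two]
    refine (natDegree_sub_le _ _).trans (max_le ?_ ((natDegree_C_natCast_le n).trans (by omega)))
    exact (natDegree_mul_le_of_le natDegree_X_le (natDegree_C_natCast_le (n + 1))).trans
      (by omega)

theorem coeff_C_natCast_self : ∀ n : ℕ, n ≠ 0 → (C R n).coeff n = 1
  | 1, _ => by simp [C_one]
  | n + 2, _ => by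
    rw [C_natCast_add_two, coeff_sub, coeff_X_mul, coeff_C_natCast_self (n + 1) n.succ_ne_zero,
      coeff_eq_zero_of_natDegree_lt ((natDegree_C_natCast_le R n).trans_lt (by omega)), sub_zero]

theorem monic_C_natCast {n : ℕ} (hn : n ≠ 0) : (C R n).Monic :=
  monic_of_natDegree_le_of_coeff_eq_one n (natDegree_C_natCast_le R n)
    (coeff_C_natCast_self R n hn)

theorem natDegree_C_natCast [Nontrivial R] {n : ℕ} (hn : n ≠ 0) : (C R n).natDegree = n :=
  natDegree_eq_of_le_of_coeff_ne_zero (natDegree_C_natCast_le R n)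
    (by simp [coeff_C_natCast_self R n hn])

end Polynomial.Chebyshev

theorem Tc_eq_chebyshev_C : ∀ n : ℕ, Tc n = Chebyshev.C ℤ n
  | 0 => by simp [Tc, Chebyshev.C_zero]
  | 1 => by simp [Tc, Chebyshev.C_one]
  | n + 2 => by
    rw [Tc, Chebyshev.C_natCast_add_two, Tc_eq_chebyshev_C (n + 1), Tc_eq_chebyshev_C n]

section Chebyshev

variable (R : Type*) [CommRing R]

theorem map_Tch_of_ne_zero {n : ℕ} (hn : n ≠ 0) :
    (Tch n).map (Int.castRingHom R) = Chebyshev.C R n := by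
  rw [Tch, if_neg hn, Tc_eq_chebyshev_C, Chebyshev.map_C]

theorem map_Tch_zero : (Tch 0).map (Int.castRingHom R) = 1 := by
  simp [Tch]

theorem monic_map_Tch (n : ℕ) : ((Tch n).map (Int.castRingHom R)).Monic := by
  rcases eq_or_ne n 0 with rfl | hn
  · rw [map_Tch_zero]; exact monic_one
  · rw [map_Tch_of_ne_zero R hn]; exact Chebyshev.monic_C_natCast R hn

theorem natDegree_map_Tch [Nontrivial R] (n : ℕ) :
    ((Tch n).map (Int.castRingHom R)).natDegree = n := by
  rcases eq_or_ne n 0 with rfl | hn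
  · rw [map_Tch_zero, natDegree_one]
  · rw [map_Tch_of_ne_zero R hn, Chebyshev.natDegree_C_natCast R hn]

noncomputable def chebyshevSequence [Nontrivial R] : Polynomial.Sequence R where
  elems' n := (Tch n).map (Int.castRingHom R)
  degree_eq' n := by
    rw [degree_eq_natDegree (monic_map_Tch R n).ne_zero, natDegree_map_Tch]

theorem chebyshevSequence_apply [Nontrivial R] (n : ℕ) :
    chebyshevSequence R n = (Tch n).map (Int.castRingHom R) :=
  rfl

noncomputable def chebyshevBasis [IsDomain R] : Module.Basis ℕ R R[X] :=
  (chebyshevSequence R).basis fun n ↦ by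
    rw [chebyshevSequence_apply, (monic_map_Tch R n).leadingCoeff]
    exact isUnit_one

variable {R} [IsDomain R]

theorem chebyshevBasis_apply (n : ℕ) :
    chebyshevBasis R n = (Tch n).map (Int.castRingHom R) :=
  (chebyshevSequence R).basis_eq_self _ n

theorem chebyshevBasis_repr_C_natCast (n : ℕ) :
    (chebyshevBasis R).repr (Chebyshev.C R n) = Finsupp.single n (if n = 0 then 2 else 1) := by
  have h : Chebyshev.C R n = (if n = 0 then 2 else 1 : R) • chebyshevBasis R n := by
    rcases eq_or_ne n 0 with rfl | hn
    · simpa [chebyshevBasis_apply, map_Tch_zero, Chebyshev.C_zero, Algebra.smul_def]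
        using (map_ofNat C 2).symm
    · simp [hn, chebyshevBasis_apply, map_Tch_of_ne_zero R hn]
  rw [h, map_smul, Module.Basis.repr_self, Finsupp.smul_single_one]

theorem chebyshevBasis_repr_mul {a k : ℕ} (ha : a ≠ 0) (hak : 2 * a ≤ k) :
    (chebyshevBasis R).repr (chebyshevBasis R a * chebyshevBasis R (k - a)) =
      Finsupp.single k 1 + Finsupp.single (k - 2 * a) (if k - 2 * a = 0 then 2 else 1) := by
  rw [chebyshevBasis_apply, chebyshevBasis_apply, map_Tch_of_ne_zero R ha,
    map_Tch_of_ne_zero R (by omega), Chebyshev.C_natCast_mul_C_natCast R (by omega), map_add,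
    chebyshevBasis_repr_C_natCast, chebyshevBasis_repr_C_natCast, if_neg (by omega),
    show a + (k - a) = k by omega, show k - a - a = k - 2 * a by omega]

theorem exists_chebyshevBasis_mul_repr {k j : ℕ} (hk : 4 ≤ k) (hj : j < k) :
    ∃ a a', a < k ∧ a' < k ∧ a + a' = k ∧
      (chebyshevBasis R).repr (chebyshevBasis R a * chebyshevBasis R a') k = 1 ∧
      (chebyshevBasis R).repr (chebyshevBasis R a * chebyshevBasis R a') j = 0 := by
  have key : ∀ a, a ≠ 0 → 2 * a ≤ k → j ≠ k - 2 * a → ∃ a', a < k ∧ a' < k ∧ a + a' = k ∧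
      (chebyshevBasis R).repr (chebyshevBasis R a * chebyshevBasis R a') k = 1 ∧
      (chebyshevBasis R).repr (chebyshevBasis R a * chebyshevBasis R a') j = 0 := by
    intro a ha hak hja
    refine ⟨k - a, by omega, by omega, by omega, ?_⟩
    rw [chebyshevBasis_repr_mul ha hak]
    simp [hja.symm, hj.ne', show k - 2 * a ≠ k by omega]
  by_cases hjk : j = k - 2
  · exact ⟨2, key 2 two_ne_zero (by omega) (by omega)⟩
  · exact ⟨1, key 1 one_ne_zero (by omega) hjk⟩

end Chebyshev

theorem stmt_10_general {R : Type*} [CommRing R] [IsDomain R] (Rp : Set R)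
    (hcap : ∀ a : R, a ∈ Rp → -a ∈ Rp → a = 0)
    (P : ℕ → Polynomial R)
    (hP : ∀ n, (P n).Monic ∧ (P n).natDegree = n)
    (hpos : ∀ m l : ℕ, ∃ c : ℕ → R, (∀ i, c i ∈ Rp) ∧
      P m * P l = ∑ i ∈ Finset.range (m + l + 1), Polynomial.C (c i) * P i)
    (hge : ∀ n, ∃ c : ℕ → R, (∀ i, c i ∈ Rp) ∧
      P n = ∑ i ∈ Finset.range (n + 1),
        Polynomial.C (c i) * (Tch i).map (Int.castRingHom R))
    (k : ℕ) (hk : 4 ≤ k)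
    (hlt : ∀ i < k, P i = (Tch i).map (Int.castRingHom R)) :
    P k = (Tch k).map (Int.castRingHom R) := by
  set b := chebyshevBasis R
  simp only [← chebyshevBasis_apply] at hge hlt ⊢
  obtain ⟨c, hc, hPk⟩ := hge k
  simp only [C_mul'] at hPk
  have hck : c k = 1 := by
    calc c k = (∑ i ∈ Finset.range (k + 1), c i • chebyshevSequence R i).coeff k :=
          ((chebyshevSequence R).coeff_sum_smul_self (monic_map_Tch R k) c).symm
      _ = (P k).coeff k := by simp only [hPk, chebyshevBasis_apply, chebyshevSequence_apply]
      _ = 1 := by simpa [(hP k).2] using (hP k).1.coeff_natDegree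
  have hcj : ∀ j < k, c j = 0 := by
    intro j hj
    obtain ⟨a, a', ha, ha', rfl, hxk, hxj⟩ := exists_chebyshevBasis_mul_repr (R := R) hk hj
    obtain ⟨d, hd, hx⟩ := hpos a a'
    simp only [C_mul', hlt a ha, hlt a' ha'] at hx
    exact b.coeff_eq_zero_of_repr_sum_smul hcap hc hd hck hlt hPk hj (hx ▸ hxk) (hx ▸ hxj)
  rw [hPk, Finset.sum_range_succ, hck, one_smul, add_eq_right]
  exact Finset.sum_eq_zero fun i hi ↦ by rw [hcj i (Finset.mem_range.mp hi), zero_smul]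

/-- if (Pₙ) is normalized, {Pₙ(z)} is a positive basis of R[z],
    (Pₙ) ≥ (T̂ₙ), and Pᵢ = T̂ᵢ for all i < k where k ≥ 4, then P_k = T̂_k. -/
theorem stmt_10 {R : Type*} [CommRing R] [IsDomain R] (Rp : Set R)
    (h1 : (1 : R) ∈ Rp)
    (hadd : ∀ a ∈ Rp, ∀ b ∈ Rp, a + b ∈ Rp)
    (hmul : ∀ a ∈ Rp, ∀ b ∈ Rp, a * b ∈ Rp)
    (hcap : ∀ a : R, a ∈ Rp → -a ∈ Rp → a = 0)
    (P : ℕ → Polynomial R)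
    (hP : ∀ n, (P n).Monic ∧ (P n).natDegree = n)
    (hpos : ∀ m l : ℕ, ∃ c : ℕ → R, (∀ i, c i ∈ Rp) ∧
      P m * P l = ∑ i ∈ Finset.range (m + l + 1), Polynomial.C (c i) * P i)
    (hge : ∀ n, ∃ c : ℕ → R, (∀ i, c i ∈ Rp) ∧
      P n = ∑ i ∈ Finset.range (n + 1),
        Polynomial.C (c i) * (Tch i).map (Int.castRingHom R))
    (k : ℕ) (hk : 4 ≤ k)
    (hlt : ∀ i < k, P i = (Tch i).map (Int.castRingHom R)) :
    P k = (Tch k).map (Int.castRingHom R) :=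
  stmt_10_general Rp hcap P hP hpos hge k hk hlt
end

section
/- Let G_n(x) ∈ ℤ[q^{±1}][x] be defined by G_0 = G_1 = 0 and G_n = Σ_{i=1}^{⌊n/2⌋} q^{4i-n-2} S_{n-2i}(x) for n ≥ 2. Then G_{n+1} = q^{-1} x G_n - q^{-2} G_{n-1} + q^{n-1} A_n for all n ≥ 1, where A_n = 1 if n is odd and 0 if n is even. -/
open Polynomial

/-- Sₙ viewed in ℤ[q^{±1}][x]. -/
noncomputable def ScL (n : ℕ) : Polynomial (LaurentPolynomial ℤ) :=
  (Sc n).map (Int.castRingHom (LaurentPolynomial ℤ))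

/-- Gₙ(x) ∈ ℤ[q^{±1}][x]: G₀ = G₁ = 0, Gₙ = Σ_{i=1}^{⌊n/2⌋} q^{4i-n-2} S_{n-2i}(x). -/
noncomputable def Gp (n : ℕ) : Polynomial (LaurentPolynomial ℤ) :=
  if n ≤ 1 then 0 else
    ∑ i ∈ Finset.Icc 1 (n / 2),
      Polynomial.C (LaurentPolynomial.T (4 * (i : ℤ) - (n : ℤ) - 2)) * ScL (n - 2 * i)

/-!
Splitting off the `i = 1` term of the sum gives `G_{n+2} = q² G_n + q^{-n} S_n`. Hence the
defect `D_n = G_{n+2} - q⁻¹ x G_{n+1} + q⁻² G_n` satisfies `D_{n+2} = q² D_n`: the Chebyshev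
terms add up to `q^{-n-2} (S_{n+2} - x S_{n+1} + S_n) = 0`. With `D_0 = 1` and `D_1 = 0` this
gives `D_n = q^n A_{n+1}`.
-/

open LaurentPolynomial (T)

lemma C_T_mul_C_T {R : Type*} [Semiring R] (a b : ℤ) :
    (C (T a) * C (T b) : Polynomial (LaurentPolynomial R)) = C (T (a + b)) := by
  rw [← C_mul, ← LaurentPolynomial.T_add]

lemma ScL_add_two (n : ℕ) : ScL (n + 2) = X * ScL (n + 1) - ScL n := by
  simp [ScL, Sc, Polynomial.map_sub, Polynomial.map_mul]

lemma Gp_eq_sum_range (n : ℕ) :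
    Gp n = ∑ i ∈ Finset.range (n / 2), C (T (4 * (i : ℤ) - n + 2)) * ScL (n - 2 - 2 * i) := by
  rw [Gp]
  split_ifs with hn
  · simp [show n / 2 = 0 by omega]
  · rw [← Finset.Ico_add_one_right_eq_Icc, Finset.sum_Ico_eq_sum_range, Nat.add_sub_cancel]
    refine Finset.sum_congr rfl fun i _ => ?_
    rw [show n - 2 * (1 + i) = n - 2 - 2 * i by omega]
    push_cast; ring_nf

lemma Gp_add_two (n : ℕ) : Gp (n + 2) = C (T 2) * Gp n + C (T (-n)) * ScL n := by
  rw [Gp_eq_sum_range, Gp_eq_sum_range, show (n + 2) / 2 = n / 2 + 1 by omega,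
    Finset.sum_range_succ', Finset.mul_sum]
  refine congrArg₂ (· + ·) (Finset.sum_congr rfl fun i _ => ?_) ?_
  · rw [← mul_assoc, C_T_mul_C_T, show n + 2 - 2 - 2 * (i + 1) = n - 2 - 2 * i by omega]
    push_cast; ring_nf
  · norm_num

noncomputable def recurrenceDefect (n : ℕ) : Polynomial (LaurentPolynomial ℤ) :=
  Gp (n + 2) - C (T (-1)) * X * Gp (n + 1) + C (T (-2)) * Gp n

lemma Gp_zero : Gp 0 = 0 := by simp [Gp]

lemma Gp_one : Gp 1 = 0 := by simp [Gp]

lemma Gp_two : Gp 2 = 1 := by simp [Gp_add_two 0, Gp_zero, ScL, Sc]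

lemma recurrenceDefect_zero : recurrenceDefect 0 = 1 := by
  simp [recurrenceDefect, Gp_zero, Gp_one, Gp_two]

lemma recurrenceDefect_one : recurrenceDefect 1 = 0 := by
  simp [recurrenceDefect, Gp_add_two 1, Gp_one, Gp_two, ScL, Sc]

lemma recurrenceDefect_add_two (n : ℕ) :
    recurrenceDefect (n + 2) = C (T 2) * recurrenceDefect n := by
  have h2 := Gp_add_two n
  have h3 := Gp_add_two (n + 1)
  have h4 := Gp_add_two (n + 2)
  push_cast at h3 h4
  have hq₁ : (C (T (-1)) : Polynomial (LaurentPolynomial ℤ)) * C (T (-(n + 1 : ℤ))) =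
      C (T (-(n + 2 : ℤ))) := by
    rw [C_T_mul_C_T]; ring_nf
  have hq₂ : (C (T (-2)) : Polynomial (LaurentPolynomial ℤ)) * C (T (-n : ℤ)) =
      C (T (-(n + 2 : ℤ))) := by
    rw [C_T_mul_C_T]; ring_nf
  unfold recurrenceDefect
  linear_combination h4 - C (T (-1)) * X * h3 + C (T (-2)) * h2
    + C (T (-(n + 2 : ℤ))) * ScL_add_two n - X * ScL (n + 1) * hq₁ + ScL n * hq₂

lemma recurrenceDefect_eq (n : ℕ) :
    recurrenceDefect n = C (T n) * if Even n then 1 else 0 := by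
  induction n using Nat.twoStepInduction with
  | zero => simp [recurrenceDefect_zero]
  | one => simp [recurrenceDefect_one]
  | more n ih _ =>
    rw [recurrenceDefect_add_two, ih, ← mul_assoc, C_T_mul_C_T, add_comm (2 : ℤ)]
    simp only [Nat.even_add_one, not_not, Nat.cast_add, Nat.cast_ofNat]

theorem stmt_14_general (n : ℕ) :
    Gp (n + 1) = Polynomial.C (LaurentPolynomial.T (-1)) * X * Gp n -
      Polynomial.C (LaurentPolynomial.T (-2)) * Gp (n - 1) +
      Polynomial.C (LaurentPolynomial.T ((n : ℤ) - 1)) * (if Odd n then 1 else 0) := by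
  cases n with
  | zero => simp [Gp_zero, Gp_one]
  | succ m =>
    have h := recurrenceDefect_eq m
    rw [recurrenceDefect] at h
    simp only [Nat.odd_add_one, Nat.not_odd_iff_even, Nat.add_sub_cancel, Nat.cast_add_one,
      add_sub_cancel_right]
    linear_combination h

/-- G_{n+1} = q⁻¹ x Gₙ - q⁻² G_{n-1} + q^{n-1} Aₙ for n ≥ 1,
    where Aₙ = 1 for n odd and 0 for n even. -/
theorem stmt_14 (n : ℕ) (hn : 1 ≤ n) :
    Gp (n + 1) = Polynomial.C (LaurentPolynomial.T (-1)) * X * Gp n -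
      Polynomial.C (LaurentPolynomial.T (-2)) * Gp (n - 1) +
      Polynomial.C (LaurentPolynomial.T ((n : ℤ) - 1)) * (if Odd n then 1 else 0) :=
  stmt_14_general n
end
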